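/- Let f : ℝⁿ → ℝ be three times continuously differentiable, μ-strongly convex and M-self-concordant, with unique minimizer x*, and let (x_k, B_k) be the iterates of adaptive BFGS (Algorithm 1). Write Δ := f(x₀) − f(x*), I_∞ := {k ∈ ℕ : Mη_k < 1}, I_k := {i ∈ I_∞ : i < k}, and Ī_k := {0,1,…,k−1} \ I_k. Then for every k ≥ 1, the cardinality satisfies |Ī_k| ≤ 4M²Δ. -/

import Mathlib

noncomputable section

open scoped BigOperators Classical

/-- Vectors in `ℝⁿ` with the Euclidean norm. -/
abbrev V (n : ℕ) := EuclideanSpace ℝ (Fin n)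

/-- The Euclidean dot product `uᵀv`. -/
def dot {n : ℕ} (u v : V n) : ℝ := ∑ i, u i * v i

/-- The Hessian quadratic form `dᵀ∇²f(x)d`. -/
def hessQ {n : ℕ} (f : V n → ℝ) (x d : V n) : ℝ := iteratedFDeriv ℝ 2 f x ![d, d]

/-- The weighted norm `‖d‖ₓ = (dᵀ∇²f(x)d)^{1/2}`. -/
def wnorm {n : ℕ} (f : V n → ℝ) (x d : V n) : ℝ := Real.sqrt (hessQ f x d)

/-- `f` is `μ`-strongly convex. -/
def StrongConvex {n : ℕ} (μ : ℝ) (f : V n → ℝ) : Prop :=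
  ∀ x y : V n, ∀ l : ℝ, 0 ≤ l → l ≤ 1 →
    f (l • x + (1 - l) • y) ≤ l * f x + (1 - l) * f y - l * (1 - l) * μ / 2 * ‖x - y‖ ^ 2

/-- `f` has `L`-Lipschitz continuous gradient. -/
def LipschitzGrad {n : ℕ} (L : ℝ) (f : V n → ℝ) : Prop :=
  ∀ x y : V n, ‖gradient f x - gradient f y‖ ≤ L * ‖x - y‖

/-- `f` is `M`-self-concordant: `|D³f(x)[d,d,d]| ≤ 2M (dᵀ∇²f(x)d)^{3/2}`. -/
def SelfConcordant {n : ℕ} (M : ℝ) (f : V n → ℝ) : Prop :=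
  ∀ x d : V n, |iteratedFDeriv ℝ 3 f x ![d, d, d]| ≤ 2 * M * hessQ f x d ^ ((3 : ℝ) / 2)

/-- `f` has `L₂`-Lipschitz continuous Hessian. -/
def LipschitzHessian {n : ℕ} (L₂ : ℝ) (f : V n → ℝ) : Prop :=
  ∀ x y : V n, ‖iteratedFDeriv ℝ 2 f x - iteratedFDeriv ℝ 2 f y‖ ≤ L₂ * ‖x - y‖

/-- `ω(z) = z - ln(1+z)`. -/
def omegaFn (z : ℝ) : ℝ := z - Real.log (1 + z)

/-- `ω⋆(z) = -z - ln(1-z)`. -/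
def omegaStar (z : ℝ) : ℝ := -z - Real.log (1 - z)

/-- Matrix–vector multiplication acting on Euclidean space. -/
def mulv {n : ℕ} (A : Matrix (Fin n) (Fin n) ℝ) (v : V n) : V n :=
  (EuclideanSpace.equiv (Fin n) ℝ).symm (A.mulVec (EuclideanSpace.equiv (Fin n) ℝ v))

/-- `g_k = ∇f(x_k)`. -/
def gvec {n : ℕ} (f : V n → ℝ) (x : ℕ → V n) (k : ℕ) : V n := gradient f (x k)

/-- `d_k = -B_k⁻¹ g_k`. -/
def dvec {n : ℕ} (f : V n → ℝ) (x : ℕ → V n) (B : ℕ → Matrix (Fin n) (Fin n) ℝ) (k : ℕ) : V n :=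
  -(mulv (B k)⁻¹ (gvec f x k))

/-- `η_k = -g_kᵀd_k / ‖d_k‖_{x_k}`. -/
def etaSeq {n : ℕ} (f : V n → ℝ) (x : ℕ → V n) (B : ℕ → Matrix (Fin n) (Fin n) ℝ) (k : ℕ) : ℝ :=
  -(dot (gvec f x k) (dvec f x B k)) / wnorm f (x k) (dvec f x B k)

/-- The adaptive step size `t_k = η_k / ((1 + M η_k) ‖d_k‖_{x_k})`. -/
def tSeq {n : ℕ} (f : V n → ℝ) (M : ℝ) (x : ℕ → V n) (B : ℕ → Matrix (Fin n) (Fin n) ℝ)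
    (k : ℕ) : ℝ :=
  etaSeq f x B k / ((1 + M * etaSeq f x B k) * wnorm f (x k) (dvec f x B k))

/-- `s_k = x_{k+1} - x_k`. -/
def svec {n : ℕ} (x : ℕ → V n) (k : ℕ) : V n := x (k + 1) - x k

/-- `y_k = g_{k+1} - g_k`. -/
def yvec {n : ℕ} (f : V n → ℝ) (x : ℕ → V n) (k : ℕ) : V n := gvec f x (k + 1) - gvec f x k

/-- The outer product `u vᵀ`. -/
def outer {n : ℕ} (u v : V n) : Matrix (Fin n) (Fin n) ℝ := Matrix.of fun i j => u i * v j

/-- The adaptive BFGS method (Algorithm 1). -/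
structure AdaptiveBFGS {n : ℕ} (f : V n → ℝ) (M : ℝ) (x : ℕ → V n)
    (B : ℕ → Matrix (Fin n) (Fin n) ℝ) : Prop where
  posdef : (B 0).PosDef
  step : ∀ k, x (k + 1) = x k + tSeq f M x B k • dvec f x B k
  update : ∀ k, B (k + 1) =
    B k - (dot (svec x k) (mulv (B k) (svec x k)))⁻¹ • (B k * outer (svec x k) (svec x k) * B k)
      + (dot (yvec f x k) (svec x k))⁻¹ • outer (yvec f x k) (yvec f x k)

/-- `α_k = ‖d_k‖_{x_k} / (√L ‖d_k‖)`. -/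
def alphaSeq {n : ℕ} (f : V n → ℝ) (L : ℝ) (x : ℕ → V n) (B : ℕ → Matrix (Fin n) (Fin n) ℝ)
    (k : ℕ) : ℝ :=
  wnorm f (x k) (dvec f x B k) / (Real.sqrt L * ‖dvec f x B k‖)

/-- The smoothness aided adaptive step size `t̃_k`. -/
def ttSeq {n : ℕ} (f : V n → ℝ) (M L : ℝ) (x : ℕ → V n) (B : ℕ → Matrix (Fin n) (Fin n) ℝ)
    (k : ℕ) : ℝ :=
  if (1 + M * etaSeq f x B k) * alphaSeq f L x B k ≤ 1 then
    etaSeq f x B k / ((1 + M * etaSeq f x B k) * wnorm f (x k) (dvec f x B k))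
  else
    (M * etaSeq f x B k * alphaSeq f L x B k ^ 2 + (1 - alphaSeq f L x B k) ^ 2)
      / (M * wnorm f (x k) (dvec f x B k))

/-- The smoothness aided adaptive BFGS method SA²-BFGS (Algorithm 3). -/
structure SA2BFGS {n : ℕ} (f : V n → ℝ) (M L : ℝ) (x : ℕ → V n)
    (B : ℕ → Matrix (Fin n) (Fin n) ℝ) : Prop where
  posdef : (B 0).PosDef
  step : ∀ k, x (k + 1) = x k + ttSeq f M L x B k • dvec f x B k
  update : ∀ k, B (k + 1) =
    B k - (dot (svec x k) (mulv (B k) (svec x k)))⁻¹ • (B k * outer (svec x k) (svec x k) * B k)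
      + (dot (yvec f x k) (svec x k))⁻¹ • outer (yvec f x k) (yvec f x k)

/-- The square root of a positive semidefinite matrix, as `Matrix.PosSemidef.sqrt` was defined
in the older Mathlib. -/
def psdSqrt {n : ℕ} {A : Matrix (Fin n) (Fin n) ℝ} (hA : A.PosSemidef) : Matrix (Fin n) (Fin n) ℝ :=
  hA.1.eigenvectorUnitary.1 * Matrix.diagonal ((↑) ∘ (Real.sqrt ·) ∘ hA.1.eigenvalues) *
    (star hA.1.eigenvectorUnitary : Matrix (Fin n) (Fin n) ℝ)

/-- `ĝ_k = P^{-1/2} g_k`. -/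
def hatg {n : ℕ} (f : V n → ℝ) (x : ℕ → V n) (P : Matrix (Fin n) (Fin n) ℝ) (hP : P.PosDef)
    (k : ℕ) : V n :=
  mulv (psdSqrt hP.posSemidef)⁻¹ (gvec f x k)

/-- `ŝ_k = P^{1/2} s_k`. -/
def hats {n : ℕ} (x : ℕ → V n) (P : Matrix (Fin n) (Fin n) ℝ) (hP : P.PosDef) (k : ℕ) : V n :=
  mulv (psdSqrt hP.posSemidef) (svec x k)

/-- `ŷ_k = P^{-1/2} y_k`. -/
def haty {n : ℕ} (f : V n → ℝ) (x : ℕ → V n) (P : Matrix (Fin n) (Fin n) ℝ) (hP : P.PosDef)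
    (k : ℕ) : V n :=
  mulv (psdSqrt hP.posSemidef)⁻¹ (yvec f x k)

/-- `cos θ̂_k = -ĝ_kᵀŝ_k / (‖ĝ_k‖ ‖ŝ_k‖)`. -/
def cosθ {n : ℕ} (f : V n → ℝ) (x : ℕ → V n) (P : Matrix (Fin n) (Fin n) ℝ) (hP : P.PosDef)
    (k : ℕ) : ℝ :=
  -(dot (hatg f x P hP k) (hats x P hP k)) / (‖hatg f x P hP k‖ * ‖hats x P hP k‖)

/-- `m̂_k = ŷ_kᵀŝ_k / ‖ŝ_k‖²`. -/
def mhat {n : ℕ} (f : V n → ℝ) (x : ℕ → V n) (P : Matrix (Fin n) (Fin n) ℝ) (hP : P.PosDef)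
    (k : ℕ) : ℝ :=
  dot (haty f x P hP k) (hats x P hP k) / ‖hats x P hP k‖ ^ 2

/-- `q̂_k = ‖ĝ_k‖² / (f(x_k) - f(x*))`. -/
def qhat {n : ℕ} (f : V n → ℝ) (x : ℕ → V n) (xstar : V n) (P : Matrix (Fin n) (Fin n) ℝ)
    (hP : P.PosDef) (k : ℕ) : ℝ :=
  ‖hatg f x P hP k‖ ^ 2 / (f (x k) - f xstar)

/-- The potential function `Ψ(A) = tr(A) - ln det(A) - n`. -/
def Psi {n : ℕ} (A : Matrix (Fin n) (Fin n) ℝ) : ℝ := A.trace - Real.log A.det - n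

/-- The Hessian matrix `∇²f(x)` in the standard basis. -/
def hessMatrix {n : ℕ} (f : V n → ℝ) (x : V n) : Matrix (Fin n) (Fin n) ℝ :=
  Matrix.of fun i j =>
    iteratedFDeriv ℝ 2 f x ![EuclideanSpace.single i (1 : ℝ), EuclideanSpace.single j (1 : ℝ)]


/-!
Along a line, `φ t = f (x + t • d)` satisfies `|φ'''| ≤ 2 M (φ'')^{3/2}`, i.e. `(φ'')^{-1/2}` is
`M`-Lipschitz. Integrating twice gives `f (x + t • d) ≤ f x + t ∇f(x)ᵀd + ω⋆(M t ‖d‖ₓ) / M²`, and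
for the adaptive step `t_k` this is the decrease `f(x_{k+1}) ≤ f(x_k) - ω(M η_k) / M²`.
Strong convexity gives `y_kᵀs_k > 0`, so every `B_k` stays positive definite and `η_k ≥ 0`.
Since `ω(z) ≥ 1/4` for `z ≥ 1`, each index with `M η_k ≥ 1` uses up at least `1 / (4 M²)` of the
total decrease `f(x₀) - f(x_k) ≤ f(x₀) - f(x⋆) = Δ`.
-/

open Set

lemma image_le_of_hasDerivAt_le {f f' g g' : ℝ → ℝ} {a b : ℝ}
    (hf : ∀ t ∈ Icc a b, HasDerivAt f (f' t) t) (hg : ∀ t ∈ Icc a b, HasDerivAt g (g' t) t)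
    (ha : f a ≤ g a) (hle : ∀ t ∈ Ico a b, f' t ≤ g' t) : ∀ t ∈ Icc a b, f t ≤ g t :=
  image_le_of_deriv_right_le_deriv_boundary
    (fun t ht => (hf t ht).continuousAt.continuousWithinAt)
    (fun t ht => (hf t (Ico_subset_Icc_self ht)).hasDerivWithinAt) ha
    (fun t ht => (hg t ht).continuousAt.continuousWithinAt)
    (fun t ht => (hg t (Ico_subset_Icc_self ht)).hasDerivWithinAt) hle

structure SelfConcordantReal (M : ℝ) (φ φ' φ'' φ''' : ℝ → ℝ) : Prop where
  hasDerivAt : ∀ t, HasDerivAt φ (φ' t) t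
  hasDerivAt_deriv : ∀ t, HasDerivAt φ' (φ'' t) t
  hasDerivAt_deriv2 : ∀ t, HasDerivAt φ'' (φ''' t) t
  deriv2_pos : ∀ t, 0 < φ'' t
  abs_deriv3_le : ∀ t, |φ''' t| ≤ 2 * M * φ'' t ^ ((3 : ℝ) / 2)

namespace SelfConcordantReal

variable {M : ℝ} {φ φ' φ'' φ''' : ℝ → ℝ}

-- Self-concordance says exactly that `t ↦ φ'' t ^ (-1/2)` is `M`-Lipschitz.
lemma inv_sqrt_sub_mul_le (h : SelfConcordantReal M φ φ' φ'' φ''') {t : ℝ} (ht : 0 ≤ t) :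
    (√(φ'' 0))⁻¹ - M * t ≤ (√(φ'' t))⁻¹ := by
  have hderiv (s : ℝ) : HasDerivAt (fun s => (√(φ'' s))⁻¹)
      (-(φ''' s / (2 * √(φ'' s))) / √(φ'' s) ^ 2) s :=
    ((h.hasDerivAt_deriv2 s).sqrt (h.deriv2_pos s).ne').inv
      (Real.sqrt_pos.mpr (h.deriv2_pos s)).ne'
  have hbound (s : ℝ) : -M ≤ -(φ''' s / (2 * √(φ'' s))) / √(φ'' s) ^ 2 := by
    have hpos := h.deriv2_pos s
    have hsqrt : 0 < √(φ'' s) := Real.sqrt_pos.mpr hpos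
    have h32 : φ'' s ^ ((3 : ℝ) / 2) = √(φ'' s) ^ 2 * √(φ'' s) := by
      rw [Real.sq_sqrt hpos.le, Real.sqrt_eq_rpow, ← Real.rpow_one_add' hpos.le (by norm_num)]
      norm_num
    have h3 := (abs_le.mp (h32 ▸ h.abs_deriv3_le s)).2
    rw [neg_div, neg_le_neg_iff, div_div, div_le_iff₀ (by positivity)]
    nlinarith
  have hline (s : ℝ) : HasDerivAt (fun s => (√(φ'' 0))⁻¹ - M * s) (-M) s := by
    simpa using ((hasDerivAt_id s).const_mul M).const_sub (√(φ'' 0))⁻¹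
  exact image_le_of_hasDerivAt_le (fun s _ => hline s) (fun s _ => hderiv s) (by simp)
    (fun s _ => hbound s) t ⟨ht, le_rfl⟩

lemma deriv2_le (h : SelfConcordantReal M φ φ' φ'' φ''') {t : ℝ} (ht : 0 ≤ t)
    (hMt : M * √(φ'' 0) * t < 1) : φ'' t ≤ φ'' 0 / (1 - M * √(φ'' 0) * t) ^ 2 := by
  set b := √(φ'' 0)
  have hb : 0 < b := Real.sqrt_pos.mpr (h.deriv2_pos 0)
  have hlow : (1 - M * b * t) / b ≤ (√(φ'' t))⁻¹ := by
    calc (1 - M * b * t) / b = b⁻¹ - M * t := by field_simp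
      _ ≤ _ := h.inv_sqrt_sub_mul_le ht
  have hsqrt : √(φ'' t) ≤ b / (1 - M * b * t) := by
    rw [← inv_div]
    exact le_inv_of_le_inv₀ (div_pos (by linarith) hb) hlow
  calc φ'' t = √(φ'' t) ^ 2 := (Real.sq_sqrt (h.deriv2_pos t).le).symm
    _ ≤ (b / (1 - M * b * t)) ^ 2 := by gcongr
    _ = φ'' 0 / (1 - M * b * t) ^ 2 := by rw [div_pow, Real.sq_sqrt (h.deriv2_pos 0).le]

lemma deriv_le (h : SelfConcordantReal M φ φ' φ'' φ''') (hM : 0 < M) {t : ℝ} (ht : 0 ≤ t)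
    (hMt : M * √(φ'' 0) * t < 1) :
    φ' t ≤ φ' 0 + √(φ'' 0) / M * ((1 - M * √(φ'' 0) * t)⁻¹ - 1) := by
  set b := √(φ'' 0)
  have hb : 0 < b := Real.sqrt_pos.mpr (h.deriv2_pos 0)
  have hMs (s : ℝ) (hs : s ∈ Icc 0 t) : M * b * s < 1 :=
    (mul_le_mul_of_nonneg_left hs.2 (mul_pos hM hb).le).trans_lt hMt
  have hpos (s : ℝ) (hs : s ∈ Icc 0 t) : 0 < 1 - M * b * s := sub_pos.mpr (hMs s hs)
  have hrhs (s : ℝ) (hs : s ∈ Icc 0 t) :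
      HasDerivAt (fun s => φ' 0 + b / M * ((1 - M * b * s)⁻¹ - 1))
        (φ'' 0 / (1 - M * b * s) ^ 2) s := by
    have hlin : HasDerivAt (fun s => 1 - M * b * s) (-(M * b)) s := by
      simpa using ((hasDerivAt_id s).const_mul (M * b)).const_sub 1
    refine ((((hlin.inv (hpos s hs).ne').sub_const 1).const_mul (b / M)).const_add
      (φ' 0)).congr_deriv ?_
    rw [show φ'' 0 = b ^ 2 from (Real.sq_sqrt (h.deriv2_pos 0).le).symm]
    field_simp
  exact image_le_of_hasDerivAt_le (fun s _ => h.hasDerivAt_deriv s) hrhs (by simp)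
    (fun s hs => h.deriv2_le hs.1 (hMs s (Ico_subset_Icc_self hs)))
    t ⟨ht, le_rfl⟩

theorem le_omegaStar (h : SelfConcordantReal M φ φ' φ'' φ''') (hM : 0 < M) {t : ℝ} (ht : 0 ≤ t)
    (hMt : M * √(φ'' 0) * t < 1) :
    φ t ≤ φ 0 + φ' 0 * t + omegaStar (M * √(φ'' 0) * t) / M ^ 2 := by
  set b := √(φ'' 0)
  have hb : 0 < b := Real.sqrt_pos.mpr (h.deriv2_pos 0)
  have hMs (s : ℝ) (hs : s ∈ Icc 0 t) : M * b * s < 1 :=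
    (mul_le_mul_of_nonneg_left hs.2 (mul_pos hM hb).le).trans_lt hMt
  have hpos (s : ℝ) (hs : s ∈ Icc 0 t) : 0 < 1 - M * b * s := sub_pos.mpr (hMs s hs)
  have hrhs (s : ℝ) (hs : s ∈ Icc 0 t) :
      HasDerivAt (fun s => φ 0 + φ' 0 * s + omegaStar (M * b * s) / M ^ 2)
        (φ' 0 + b / M * ((1 - M * b * s)⁻¹ - 1)) s := by
    have hlin : HasDerivAt (fun s => 1 - M * b * s) (-(M * b)) s := by
      simpa using ((hasDerivAt_id s).const_mul (M * b)).const_sub 1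
    have hω : HasDerivAt (fun s => omegaStar (M * b * s))
        (-(M * b) - -(M * b) / (1 - M * b * s)) s := by
      unfold omegaStar
      exact (((hasDerivAt_id s).const_mul (M * b)).neg.congr_deriv (by simp)).sub
        (hlin.log (hpos s hs).ne')
    refine ((((hasDerivAt_id s).const_mul (φ' 0)).const_add (φ 0)).add
      (hω.div_const (M ^ 2))).congr_deriv ?_
    field_simp [(hpos s hs).ne']
    ring
  exact image_le_of_hasDerivAt_le (fun s _ => h.hasDerivAt s) hrhs (by simp [omegaStar])
    (fun s hs => h.deriv_le hM hs.1 (hMs s (Ico_subset_Icc_self hs)))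
    t ⟨ht, le_rfl⟩

end SelfConcordantReal

section LineDerivative

variable {E F : Type*} [NormedAddCommGroup E] [NormedSpace ℝ E] [NormedAddCommGroup F]
  [NormedSpace ℝ F]

lemma HasFDerivAt.hasDerivAt_comp_add_smul {g : E → F} {g' : E →L[ℝ] F} {x d : E} {t : ℝ}
    (hg : HasFDerivAt g g' (x + t • d)) : HasDerivAt (fun s : ℝ => g (x + s • d)) (g' d) t := by
  have hline : HasDerivAt (fun s : ℝ => x + s • d) d t := by
    simpa using ((hasDerivAt_id t).smul_const d).const_add x
  exact hg.comp_hasDerivAt t hline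

end LineDerivative

section Smooth

variable {n : ℕ} {f : V n → ℝ}

lemma hasDerivAt_apply_add_smul (hf : Differentiable ℝ f) (x d : V n) (t : ℝ) :
    HasDerivAt (fun s : ℝ => f (x + s • d)) (fderiv ℝ f (x + t • d) d) t :=
  (hf _).hasFDerivAt.hasDerivAt_comp_add_smul

lemma hasDerivAt_fderiv_add_smul (hf : ContDiff ℝ 2 f) (x d : V n) (t : ℝ) :
    HasDerivAt (fun s : ℝ => fderiv ℝ f (x + s • d) d) (hessQ f (x + t • d) d) t := by
  have h2 : HasFDerivAt (fderiv ℝ f) (fderiv ℝ (fderiv ℝ f) (x + t • d)) (x + t • d) :=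
    ((hf.fderiv_right (m := 1) (by norm_num)).differentiable (by norm_num) _).hasFDerivAt
  have := ((ContinuousLinearMap.apply ℝ ℝ d).hasFDerivAt.comp _ h2).hasDerivAt_comp_add_smul
  simpa [hessQ, iteratedFDeriv_two_apply] using this

lemma hasDerivAt_hessQ_add_smul (hf : ContDiff ℝ 3 f) (x d : V n) (t : ℝ) :
    HasDerivAt (fun s : ℝ => hessQ f (x + s • d) d)
      (iteratedFDeriv ℝ 3 f (x + t • d) ![d, d, d]) t := by
  have h3 : HasFDerivAt (iteratedFDeriv ℝ 2 f) (fderiv ℝ (iteratedFDeriv ℝ 2 f) (x + t • d))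
      (x + t • d) :=
    ((hf.iteratedFDeriv_right (m := 1) (i := 2) (by norm_num)).differentiable
      (by norm_num) _).hasFDerivAt
  have := ((ContinuousMultilinearMap.apply ℝ (fun _ : Fin 2 => V n) ℝ ![d, d]).hasFDerivAt.comp
    _ h3).hasDerivAt_comp_add_smul
  rw [iteratedFDeriv_succ_apply_left]
  exact this

lemma dot_gradient (x v : V n) : dot (gradient f x) v = fderiv ℝ f x v := by
  have hinner : dot (gradient f x) v = inner ℝ (gradient f x) v := by
    simp only [dot, PiLp.inner_apply, RCLike.inner_apply, conj_trivial, mul_comm]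
  exact hinner.trans InnerProductSpace.toDual_symm_apply

namespace StrongConvex

variable {μ : ℝ}

lemma convexOn_line (hsc : StrongConvex μ f) (x d : V n) :
    ConvexOn ℝ univ fun t : ℝ => f (x + t • d) - μ / 2 * ‖d‖ ^ 2 * t ^ 2 := by
  refine ⟨convex_univ, fun t₁ _ t₂ _ a b ha hb hab => ?_⟩
  obtain rfl : b = 1 - a := by linarith
  have hpt : a • (x + t₁ • d) + (1 - a) • (x + t₂ • d) = x + (a • t₁ + (1 - a) • t₂) • d := by
    module
  have hdist : ‖x + t₁ • d - (x + t₂ • d)‖ ^ 2 = (t₁ - t₂) ^ 2 * ‖d‖ ^ 2 := by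
    rw [add_sub_add_left_eq_sub, ← sub_smul, norm_smul, mul_pow, Real.norm_eq_abs, sq_abs]
  have h := hsc (x + t₁ • d) (x + t₂ • d) a ha (by linarith)
  rw [hpt, hdist] at h
  simp only [smul_eq_mul] at h ⊢
  nlinarith

lemma monotone_fderiv_line (hf : Differentiable ℝ f) (hsc : StrongConvex μ f) (x d : V n) :
    Monotone fun t : ℝ => fderiv ℝ f (x + t • d) d - μ * ‖d‖ ^ 2 * t := by
  have hderiv (t : ℝ) : HasDerivAt (fun t : ℝ => f (x + t • d) - μ / 2 * ‖d‖ ^ 2 * t ^ 2)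
      (fderiv ℝ f (x + t • d) d - μ * ‖d‖ ^ 2 * t) t := by
    refine ((hasDerivAt_apply_add_smul hf x d t).sub
      ((hasDerivAt_pow 2 t).const_mul (μ / 2 * ‖d‖ ^ 2))).congr_deriv ?_
    ring
  have hmono := (hsc.convexOn_line x d).monotoneOn_deriv fun t _ => (hderiv t).differentiableAt
  intro s t hst
  simpa only [(hderiv _).deriv] using hmono (mem_univ s) (mem_univ t) hst

lemma mul_norm_sq_le_hessQ (hf : ContDiff ℝ 2 f) (hsc : StrongConvex μ f) (x d : V n) :
    μ * ‖d‖ ^ 2 ≤ hessQ f x d := by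
  have hderiv : HasDerivAt (fun t : ℝ => fderiv ℝ f (x + t • d) d - μ * ‖d‖ ^ 2 * t)
      (hessQ f x d - μ * ‖d‖ ^ 2) 0 := by
    have h := (hasDerivAt_fderiv_add_smul hf x d 0).sub
      ((hasDerivAt_id (0 : ℝ)).const_mul (μ * ‖d‖ ^ 2))
    rw [zero_smul, add_zero, mul_one] at h
    exact h
  have := hderiv.nonneg_of_monotone
    (hsc.monotone_fderiv_line (hf.differentiable (by norm_num)) x d)
  linarith

lemma mul_norm_sq_le_fderiv_sub (hf : Differentiable ℝ f) (hsc : StrongConvex μ f)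
    (x d : V n) : μ * ‖d‖ ^ 2 ≤ fderiv ℝ f (x + d) d - fderiv ℝ f x d := by
  have := hsc.monotone_fderiv_line hf x d zero_le_one
  simp only [zero_smul, add_zero, one_smul, mul_zero, sub_zero, mul_one] at this
  linarith

lemma hessQ_pos (hμ : 0 < μ) (hf : ContDiff ℝ 2 f) (hsc : StrongConvex μ f) (x : V n) {d : V n}
    (hd : d ≠ 0) : 0 < hessQ f x d :=
  (by positivity : 0 < μ * ‖d‖ ^ 2).trans_le (hsc.mul_norm_sq_le_hessQ hf x d)

end StrongConvex

lemma omegaFn_nonneg {z : ℝ} (hz : 0 ≤ z) : 0 ≤ omegaFn z := by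
  have := Real.log_le_sub_one_of_pos (by linarith : 0 < 1 + z)
  unfold omegaFn
  linarith

lemma one_div_four_le_omegaFn {z : ℝ} (hz : 1 ≤ z) : 1 / 4 ≤ omegaFn z := by
  have hlog : Real.log (1 + z) = Real.log ((1 + z) / 2) + Real.log 2 := by
    rw [← Real.log_mul (by positivity) (by norm_num)]
    ring_nf
  have := Real.log_le_sub_one_of_pos (by positivity : 0 < (1 + z) / 2)
  have := Real.log_two_lt_d9
  unfold omegaFn
  nlinarith

lemma omegaStar_div_one_add {z : ℝ} (hz : 0 < 1 + z) :
    omegaStar (z / (1 + z)) = z ^ 2 / (1 + z) - omegaFn z := by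
  have hlog : Real.log (1 - z / (1 + z)) = -Real.log (1 + z) := by
    rw [← Real.log_inv]
    congr 1
    field_simp
    ring
  unfold omegaStar omegaFn
  rw [hlog]
  field_simp
  ring

theorem selfConcordantReal_line {μ M : ℝ} (hμ : 0 < μ) (hf : ContDiff ℝ 3 f)
    (hsc : StrongConvex μ f) (hself : SelfConcordant M f) (x : V n) {d : V n} (hd : d ≠ 0) :
    SelfConcordantReal M (fun t => f (x + t • d)) (fun t => fderiv ℝ f (x + t • d) d)
      (fun t => hessQ f (x + t • d) d) (fun t => iteratedFDeriv ℝ 3 f (x + t • d) ![d, d, d])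
    where
  hasDerivAt := hasDerivAt_apply_add_smul (hf.differentiable (by norm_num)) x d
  hasDerivAt_deriv := hasDerivAt_fderiv_add_smul (hf.of_le (by norm_num)) x d
  hasDerivAt_deriv2 := hasDerivAt_hessQ_add_smul hf x d
  deriv2_pos t := hsc.hessQ_pos hμ (hf.of_le (by norm_num)) _ hd
  abs_deriv3_le t := hself _ d

namespace SelfConcordant

variable {μ M : ℝ}

theorem apply_add_smul_le (hμ : 0 < μ) (hM : 0 < M) (hf : ContDiff ℝ 3 f)
    (hsc : StrongConvex μ f) (hself : SelfConcordant M f) (x : V n) {d : V n} (hd : d ≠ 0)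
    {t : ℝ} (ht : 0 ≤ t) (hMt : M * wnorm f x d * t < 1) :
    f (x + t • d) ≤ f x + fderiv ℝ f x d * t + omegaStar (M * wnorm f x d * t) / M ^ 2 := by
  simpa [wnorm] using
    (selfConcordantReal_line hμ hf hsc hself x hd).le_omegaStar hM ht (by simpa [wnorm] using hMt)

theorem apply_add_adaptive_step_le (hμ : 0 < μ) (hM : 0 < M) (hf : ContDiff ℝ 3 f)
    (hsc : StrongConvex μ f) (hself : SelfConcordant M f) (x : V n) {d : V n} (hd : d ≠ 0)
    {η : ℝ} (hη : 0 ≤ η) (hηd : η * wnorm f x d = -fderiv ℝ f x d) :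
    f (x + (η / ((1 + M * η) * wnorm f x d)) • d) ≤ f x - omegaFn (M * η) / M ^ 2 := by
  have hb : 0 < wnorm f x d := Real.sqrt_pos.mpr (hsc.hessQ_pos hμ (hf.of_le (by norm_num)) x hd)
  have hMη : 0 < 1 + M * η := by positivity
  have hMt : M * wnorm f x d * (η / ((1 + M * η) * wnorm f x d)) = M * η / (1 + M * η) := by
    field_simp
  have hstep := apply_add_smul_le hμ hM hf hsc hself x hd (by positivity)
    (hMt ▸ (div_lt_one hMη).mpr (by linarith))
  rw [hMt, omegaStar_div_one_add hMη, show fderiv ℝ f x d = -(η * wnorm f x d) by linarith]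
    at hstep
  calc _ ≤ _ := hstep
    _ = f x - omegaFn (M * η) / M ^ 2 := by
      field_simp
      ring

end SelfConcordant

namespace Matrix

variable {ι : Type*} [Fintype ι]

lemma IsSymm.dotProduct_mulVec_comm {A : Matrix ι ι ℝ} (hA : A.IsSymm) (v w : ι → ℝ) :
    v ⬝ᵥ A *ᵥ w = w ⬝ᵥ A *ᵥ v := by
  rw [dotProduct_mulVec, ← mulVec_transpose, hA.eq, dotProduct_comm]

lemma dotProduct_vecMulVec_self_mulVec (u v : ι → ℝ) : v ⬝ᵥ vecMulVec u u *ᵥ v = (u ⬝ᵥ v) ^ 2 := by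
  rw [dotProduct_mulVec, vecMul_vecMulVec, smul_dotProduct, smul_eq_mul, dotProduct_comm v u, sq]

-- Cauchy–Schwarz for the inner product `B` gives `(vᵀBs)² ≤ (vᵀBv)(sᵀBs)`, with equality only
-- for `v ∥ s`, and on that line the last term is positive.
lemma PosDef.bfgs_update_quadratic_pos {B : Matrix ι ι ℝ} (hB : B.PosDef) {s y v : ι → ℝ}
    (hs : s ≠ 0) (hys : 0 < y ⬝ᵥ s) (hv : v ≠ 0) :
    0 < v ⬝ᵥ B *ᵥ v - (v ⬝ᵥ B *ᵥ s) ^ 2 / (s ⬝ᵥ B *ᵥ s) + (y ⬝ᵥ v) ^ 2 / (y ⬝ᵥ s) := by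
  have hsymm : B.IsSymm := isHermitian_iff_isSymm.mp hB.isHermitian
  have hq : 0 < s ⬝ᵥ B *ᵥ s := by simpa using hB.dotProduct_mulVec_pos hs
  set a := (v ⬝ᵥ B *ᵥ s) / (s ⬝ᵥ B *ᵥ s)
  by_cases hpar : v = a • s
  · have ha : a ≠ 0 := by
      rintro ha
      exact hv (by simpa [ha] using hpar)
    have hval : v ⬝ᵥ B *ᵥ v - (v ⬝ᵥ B *ᵥ s) ^ 2 / (s ⬝ᵥ B *ᵥ s) + (y ⬝ᵥ v) ^ 2 / (y ⬝ᵥ s)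
        = a ^ 2 * (y ⬝ᵥ s) := by
      rw [hpar]
      simp only [mulVec_smul, smul_dotProduct, dotProduct_smul, smul_eq_mul]
      field_simp
      ring
    rw [hval]
    positivity
  · have hw : 0 < (v - a • s) ⬝ᵥ B *ᵥ (v - a • s) := by
      simpa using hB.dotProduct_mulVec_pos (sub_ne_zero.mpr hpar)
    have hexp : (v - a • s) ⬝ᵥ B *ᵥ (v - a • s)
        = v ⬝ᵥ B *ᵥ v - (v ⬝ᵥ B *ᵥ s) ^ 2 / (s ⬝ᵥ B *ᵥ s) := by
      simp only [mulVec_sub, mulVec_smul, sub_dotProduct, dotProduct_sub, smul_dotProduct,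
        dotProduct_smul, smul_eq_mul, hsymm.dotProduct_mulVec_comm s v, a]
      field_simp
      ring
    have : 0 ≤ (y ⬝ᵥ v) ^ 2 / (y ⬝ᵥ s) := by positivity
    linarith

theorem PosDef.bfgs_update {B : Matrix ι ι ℝ} (hB : B.PosDef) {s y : ι → ℝ} (hs : s ≠ 0)
    (hys : 0 < y ⬝ᵥ s) :
    (B - (s ⬝ᵥ B *ᵥ s)⁻¹ • (B * vecMulVec s s * B) + (y ⬝ᵥ s)⁻¹ • vecMulVec y y).PosDef := by
  have hsymm : B.IsSymm := isHermitian_iff_isSymm.mp hB.isHermitian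
  have hBss : B * vecMulVec s s * B = vecMulVec (B *ᵥ s) (B *ᵥ s) := by
    rw [mul_vecMulVec, vecMulVec_mul, ← mulVec_transpose, hsymm.eq]
  have hsymm_outer (u : ι → ℝ) : (vecMulVec u u).IsSymm := transpose_vecMulVec u u
  rw [hBss]
  refine PosDef.of_dotProduct_mulVec_pos (isHermitian_iff_isSymm.mpr
    ((hsymm.sub ((hsymm_outer _).smul _)).add ((hsymm_outer y).smul _))) fun v hv => ?_
  simp only [star_trivial, add_mulVec, sub_mulVec, smul_mulVec, dotProduct_add, dotProduct_sub,
    dotProduct_smul, dotProduct_vecMulVec_self_mulVec, smul_eq_mul, dotProduct_comm (B *ᵥ s) v]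
  simpa only [div_eq_inv_mul] using hB.bfgs_update_quadratic_pos hs hys hv

end Matrix

namespace AdaptiveBFGS

variable {μ M : ℝ} {x : ℕ → V n} {B : ℕ → Matrix (Fin n) (Fin n) ℝ}

theorem posDef (hμ : 0 < μ) (hf : Differentiable ℝ f) (hsc : StrongConvex μ f)
    (halg : AdaptiveBFGS f M x B) (k : ℕ) : (B k).PosDef := by
  induction k with
  | zero => exact halg.posdef
  | succ k ih =>
    have hx : x (k + 1) = x k + svec x k := by rw [svec]; abel
    rw [halg.update k]
    by_cases hs : svec x k = 0
    · have hy : yvec f x k = 0 := by rw [yvec, gvec, gvec, hx, hs, add_zero, sub_self]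
      simpa [hs, hy, dot, outer] using ih
    · have hys : dot (yvec f x k) (svec x k)
          = fderiv ℝ f (x k + svec x k) (svec x k) - fderiv ℝ f (x k) (svec x k) := by
        rw [← dot_gradient, ← dot_gradient, ← hx]
        exact sub_dotProduct _ _ _
      have hspos : 0 < μ * ‖svec x k‖ ^ 2 := by positivity
      have hyspos : 0 < dot (yvec f x k) (svec x k) :=
        hys ▸ hspos.trans_le (hsc.mul_norm_sq_le_fderiv_sub hf _ _)
      exact ih.bfgs_update (s := (svec x k).ofLp) (y := (yvec f x k).ofLp)
        (fun h => hs (congrArg (WithLp.toLp 2) h)) hyspos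

lemma etaSeq_nonneg {k : ℕ} (hB : (B k).PosDef) : 0 ≤ etaSeq f x B k := by
  have hquad : 0 ≤ -dot (gvec f x k) (dvec f x B k) := by
    have := hB.inv.posSemidef.dotProduct_mulVec_nonneg (gvec f x k).ofLp
    unfold dvec dot mulv
    simp only [dotProduct, Pi.star_apply, star_trivial, PiLp.continuousLinearEquiv_symm_apply,
      PiLp.neg_apply, mul_neg, Finset.sum_neg_distrib, neg_neg] at this ⊢
    exact this
  exact div_nonneg hquad (Real.sqrt_nonneg _)

theorem apply_succ_le (hμ : 0 < μ) (hM : 0 < M) (hf : ContDiff ℝ 3 f) (hsc : StrongConvex μ f)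
    (hself : SelfConcordant M f) (halg : AdaptiveBFGS f M x B) {k : ℕ} (hB : (B k).PosDef) :
    f (x (k + 1)) ≤ f (x k) - omegaFn (M * etaSeq f x B k) / M ^ 2 := by
  rw [halg.step k, tSeq]
  by_cases hd : dvec f x B k = 0
  · simp [etaSeq, hd, dot, omegaFn]
  have hb : 0 < wnorm f (x k) (dvec f x B k) :=
    Real.sqrt_pos.mpr (hsc.hessQ_pos hμ (hf.of_le (by norm_num)) _ hd)
  refine SelfConcordant.apply_add_adaptive_step_le hμ hM hf hsc hself (x k) hd
    (etaSeq_nonneg hB) ?_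
  rw [etaSeq, div_mul_cancel₀ _ hb.ne', gvec, dot_gradient]

end AdaptiveBFGS

end Smooth

lemma card_filter_range_le_sub {a : ℕ → ℝ} {p : ℕ → Prop} [DecidablePred p]
    (hanti : ∀ i, a (i + 1) ≤ a i) (hp : ∀ i, p i → a (i + 1) + 1 ≤ a i) (k : ℕ) :
    (((Finset.range k).filter p).card : ℝ) ≤ a 0 - a k := by
  calc (((Finset.range k).filter p).card : ℝ) = ∑ i ∈ (Finset.range k).filter p, 1 := by simp
    _ ≤ ∑ i ∈ (Finset.range k).filter p, (a i - a (i + 1)) :=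
      Finset.sum_le_sum fun i hi => by linarith [hp i (Finset.mem_filter.mp hi).2]
    _ ≤ ∑ i ∈ Finset.range k, (a i - a (i + 1)) :=
      Finset.sum_le_sum_of_subset_of_nonneg (Finset.filter_subset _ _)
        fun i _ _ => by linarith [hanti i]
    _ = a 0 - a k := Finset.sum_range_sub' a k

theorem stmt6_general {n : ℕ} (f : V n → ℝ) (μ M : ℝ) (hμ : 0 < μ) (hM : 0 < M)
    (hf : ContDiff ℝ 3 f) (hsc : StrongConvex μ f) (hself : SelfConcordant M f)
    (xstar : V n) (hmin : ∀ y, f xstar ≤ f y)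
    (x : ℕ → V n) (B : ℕ → Matrix (Fin n) (Fin n) ℝ) (halg : AdaptiveBFGS f M x B)
    (Δ : ℝ) (hΔ : Δ = f (x 0) - f xstar)
    (k : ℕ) :
    ((((Finset.range k).filter (fun i => ¬ M * etaSeq f x B i < 1)).card : ℝ)) ≤
      4 * M ^ 2 * Δ := by
  have hB := halg.posDef hμ (hf.differentiable (by norm_num)) hsc
  have hη (i : ℕ) : 0 ≤ etaSeq f x B i := AdaptiveBFGS.etaSeq_nonneg (hB i)
  have hM2 : 0 < 4 * M ^ 2 := by positivity
  have hdecrease (i : ℕ) : 4 * M ^ 2 * f (x (i + 1)) + 4 * omegaFn (M * etaSeq f x B i)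
      ≤ 4 * M ^ 2 * f (x i) := by
    have h := mul_le_mul_of_nonneg_left (halg.apply_succ_le hμ hM hf hsc hself (hB i)) hM2.le
    have hω : 4 * M ^ 2 * (f (x i) - omegaFn (M * etaSeq f x B i) / M ^ 2)
        = 4 * M ^ 2 * f (x i) - 4 * omegaFn (M * etaSeq f x B i) := by
      field_simp
    linarith
  have hcount := card_filter_range_le_sub (a := fun i => 4 * M ^ 2 * f (x i))
    (p := fun i => ¬ M * etaSeq f x B i < 1)
    (fun i => by linarith [hdecrease i, omegaFn_nonneg (mul_nonneg hM.le (hη i))])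
    (fun i hi => by linarith [hdecrease i, one_div_four_le_omegaFn (not_lt.mp hi)]) k
  calc _ ≤ 4 * M ^ 2 * f (x 0) - 4 * M ^ 2 * f (x k) := hcount
    _ ≤ 4 * M ^ 2 * Δ := by nlinarith [hmin (x k)]

theorem stmt6 {n : ℕ} (f : V n → ℝ) (μ M : ℝ) (hμ : 0 < μ) (hM : 0 < M)
    (hf : ContDiff ℝ 3 f) (hsc : StrongConvex μ f) (hself : SelfConcordant M f)
    (xstar : V n) (hmin : ∀ y, f xstar ≤ f y) (huniq : ∀ y, f y ≤ f xstar → y = xstar)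
    (x : ℕ → V n) (B : ℕ → Matrix (Fin n) (Fin n) ℝ) (halg : AdaptiveBFGS f M x B)
    (Δ : ℝ) (hΔ : Δ = f (x 0) - f xstar)
    (k : ℕ) (hk : 1 ≤ k) :
    ((((Finset.range k).filter (fun i => ¬ M * etaSeq f x B i < 1)).card : ℝ)) ≤
      4 * M ^ 2 * Δ :=
  stmt6_general f μ M hμ hM hf hsc hself xstar hmin x B halg Δ hΔ k
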